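/- ∫_0^{π/2} ∫_0^θ (u / sin u) du dθ = −π·G + (7/2)·ζ(3), where G is Catalan's constant. -/

import Mathlib

noncomputable def catalanConst : ℝ := ∑' n : ℕ, (-1 : ℝ) ^ n / (2 * n + 1) ^ 2

noncomputable def zeta3 : ℝ := ∑' n : ℕ, (1 : ℝ) / (n + 1) ^ 3

/-!
Integrating by parts in `θ` turns the double integral into `∫₀^{π/2} (π/2 - u) u / sin u du`.
Since `sin u * ∑_{k<n} 2 sin ((2k+1) u) = 1 - cos (2nu)`, the Riemann–Lebesgue lemma shows that
this integral is the sum of the series `∑ₖ 2 ∫₀^{π/2} (π/2 - u) u sin ((2k+1) u) du`, whose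
`k`-th term is `-π (-1)ᵏ / (2k+1)² + 4 / (2k+1)³`. Summing gives `-π G + 4 · (7/8) ζ(3)`.
-/

open Real Set Filter Topology MeasureTheory

namespace Real

theorem mul_sinc (x : ℝ) : x * sinc x = sin x := by
  rcases eq_or_ne x 0 with rfl | hx
  · simp
  · rw [sinc_of_ne_zero hx, mul_div_cancel₀ _ hx]

theorem sinc_pos {x : ℝ} (hx : |x| < π) : 0 < sinc x := by
  rcases eq_or_ne x 0 with rfl | hx0
  · simp
  have habs : sinc x = sin |x| / |x| := by
    rcases abs_cases x with ⟨h, -⟩ | ⟨h, -⟩ <;> rw [h]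
    · exact sinc_of_ne_zero hx0
    · rw [← sinc_of_ne_zero (neg_ne_zero.2 hx0), sinc_neg]
  rw [habs]
  exact div_pos (sin_pos_of_pos_of_lt_pi (abs_pos.2 hx0) hx) (abs_pos.2 hx0)

end Real

theorem integral_primitive_eq_integral_sub_mul {f : ℝ → ℝ} {a b : ℝ}
    (hf : ContinuousOn f (uIcc a b)) :
    ∫ θ in a..b, ∫ u in a..θ, f u = ∫ u in a..b, (b - u) * f u := by
  have hF : ∀ x ∈ Ioo (min a b) (max a b), HasDerivAt (fun θ => ∫ u in a..θ, f u) (f x) x :=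
    fun x hx => intervalIntegral.integral_hasDerivAt_right
      (hf.intervalIntegrable.mono_set (uIcc_subset_uIcc left_mem_uIcc (Ioo_subset_Icc_self hx)))
      (hf.mono Ioo_subset_Icc_self |>.stronglyMeasurableAtFilter isOpen_Ioo x hx)
      (hf.continuousAt (Icc_mem_nhds hx.1 hx.2))
  have hparts := intervalIntegral.integral_mul_deriv_eq_deriv_mul_of_hasDerivAt
    (intervalIntegral.continuousOn_primitive_interval (hf.integrableOn_compact isCompact_uIcc))
    (continuous_sub_right b).continuousOn hF
    (fun x _ => (hasDerivAt_id x).sub_const b) hf.intervalIntegrable intervalIntegrable_const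
  simp only [mul_one, intervalIntegral.integral_same, sub_self, mul_zero, zero_mul] at hparts
  rw [hparts, zero_sub, ← intervalIntegral.integral_neg]
  congr 1 with u
  ring

theorem tendsto_integral_mul_cos_cocompact {φ : ℝ → ℝ} {a b : ℝ} (hab : a ≤ b)
    (hφ : IntervalIntegrable φ volume a b) :
    Tendsto (fun t => ∫ u in a..b, φ u * cos (t * u)) (cocompact ℝ) (𝓝 0) := by
  set F : ℝ → ℂ := (Ioc a b).indicator fun u => (φ u : ℂ)
  have hF : Integrable F := (integrable_indicator_iff measurableSet_Ioc).2 hφ.1.ofReal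
  have hRL := (Complex.continuous_re.tendsto 0).comp (Real.tendsto_integral_exp_smul_cocompact F)
  -- `𝐞 x = exp (2πix)`, so the frequency `t` is reached at `t / (2π)`.
  have hscale : Tendsto (fun t : ℝ => t / (2 * π)) (cocompact ℝ) (cocompact ℝ) := by
    refine tendsto_cocompact_cocompact_of_norm fun ε => ⟨2 * π * ε, fun t ht => ?_⟩
    rw [norm_div, Real.norm_of_nonneg (by positivity : (0:ℝ) ≤ 2 * π), lt_div_iff₀ (by positivity)]
    linarith
  refine ((hRL.comp hscale).congr fun t => ?_).trans (by simp)
  simp only [Function.comp_apply]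
  rw [← Complex.reCLM_apply, ← ContinuousLinearMap.integral_comp_comm]
  · rw [intervalIntegral.integral_of_le hab, ← integral_indicator measurableSet_Ioc]
    congr 1 with u
    by_cases hu : u ∈ Ioc a b
    · simp only [F, indicator_of_mem hu, Circle.smul_def, Real.fourierChar_apply, smul_eq_mul,
        Complex.reCLM_apply, Complex.re_mul_ofReal, Complex.exp_ofReal_mul_I_re]
      rw [mul_comm, ← cos_neg]
      congr 1
      field_simp
    · simp [F, hu]
  · simpa [mul_comm] using (Real.fourierIntegral_convergent_iff (t / (2 * π))).2 hF

theorem sin_mul_sum_two_mul_sin_odd (x : ℝ) (n : ℕ) :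
    sin x * ∑ k ∈ Finset.range n, 2 * sin ((2 * k + 1) * x) = 1 - cos (2 * n * x) := by
  induction n with
  | zero => simp
  | succ n ih =>
    have hlo : 2 * (n : ℝ) * x = (2 * n + 1) * x - x := by ring
    have hhi : 2 * ((n + 1 : ℕ) : ℝ) * x = (2 * n + 1) * x + x := by push_cast; ring
    rw [Finset.sum_range_succ, mul_add, ih, hhi, cos_add, hlo, cos_sub]
    ring

theorem tendsto_sum_integral_mul_sin_mul_two_mul_sin_odd {g : ℝ → ℝ} {a b : ℝ} (hab : a ≤ b)
    (hg : IntervalIntegrable g volume a b) :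
    Tendsto (fun n => ∑ k ∈ Finset.range n, ∫ u in a..b, g u * sin u * (2 * sin ((2 * k + 1) * u)))
      atTop (𝓝 (∫ u in a..b, g u)) := by
  have hpartial (n : ℕ) :
      ∑ k ∈ Finset.range n, ∫ u in a..b, g u * sin u * (2 * sin ((2 * k + 1) * u))
        = (∫ u in a..b, g u) - ∫ u in a..b, g u * cos ((2 * n : ℝ) * u) := by
    rw [← intervalIntegral.integral_finsetSum fun k _ =>
        (hg.mul_continuousOn continuous_sin.continuousOn).mul_continuousOn
          (by fun_prop : Continuous _).continuousOn,
      ← intervalIntegral.integral_sub hg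
        (hg.mul_continuousOn (by fun_prop : Continuous _).continuousOn)]
    congr 1 with u
    rw [← Finset.mul_sum, mul_assoc, sin_mul_sum_two_mul_sin_odd]
    ring
  have hfreq : Tendsto (fun n : ℕ => (2 * n : ℝ)) atTop (cocompact ℝ) :=
    (tendsto_natCast_atTop_atTop.const_mul_atTop two_pos).mono_right atTop_le_cocompact
  simpa [hpartial] using
    tendsto_const_nhds.sub ((tendsto_integral_mul_cos_cocompact hab hg).comp hfreq)

theorem integral_sub_mul_mul_sin {a m : ℝ} (hm : m ≠ 0) :
    ∫ u in (0:ℝ)..a, (a - u) * u * sin (m * u) =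
      -(a * sin (m * a)) / m ^ 2 + 2 * (1 - cos (m * a)) / m ^ 3 := by
  have hH (u : ℝ) : HasDerivAt (fun u => -((a - u) * u * cos (m * u)) / m
      + (a - 2 * u) * sin (m * u) / m ^ 2 - 2 * cos (m * u) / m ^ 3)
      ((a - u) * u * sin (m * u)) u := by
    have hmu : HasDerivAt (fun v => m * v) m u := by simpa using (hasDerivAt_id u).const_mul m
    have hw : HasDerivAt (fun v => (a - v) * v) (a - 2 * u) u :=
      (((hasDerivAt_id' u).const_sub a).mul (hasDerivAt_id' u)).congr_deriv (by ring)
    have hw' : HasDerivAt (fun v => a - 2 * v) (-2) u :=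
      (((hasDerivAt_id' u).const_mul 2).const_sub a).congr_deriv (by ring)
    refine ((((hw.mul hmu.cos).neg.div_const m).add ((hw'.mul hmu.sin).div_const (m ^ 2))).sub
      ((hmu.cos.const_mul 2).div_const (m ^ 3))).congr_deriv ?_
    field_simp
    ring
  rw [intervalIntegral.integral_eq_sub_of_hasDerivAt (fun u _ => hH u)
    ((by fun_prop : Continuous _).intervalIntegrable _ _)]
  simp only [sub_self, zero_mul, mul_zero, cos_zero, sin_zero]
  ring

theorem integral_sub_mul_mul_sin_odd (k : ℕ) :
    ∫ u in (0:ℝ)..π / 2, (π / 2 - u) * u * sin ((2 * k + 1) * u) =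
      -(π / 2) * (-1) ^ k / (2 * k + 1) ^ 2 + 2 / (2 * k + 1) ^ 3 := by
  have hangle : (2 * k + 1) * (π / 2) = k * π + π / 2 := by ring
  rw [integral_sub_mul_mul_sin (by positivity), hangle, sin_add_pi_div_two, cos_add_pi_div_two,
    sin_nat_mul_pi, cos_nat_mul_pi]
  ring

theorem hasSum_one_div_two_mul_add_one_pow {p : ℕ} (hp : 1 < p) :
    HasSum (fun k : ℕ => 1 / (2 * k + 1 : ℝ) ^ p)
      ((1 - 1 / 2 ^ p) * ∑' n : ℕ, 1 / ((n : ℝ) + 1) ^ p) := by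
  set f : ℕ → ℝ := fun n => 1 / ((n : ℝ) + 1) ^ p
  have hf : Summable f := by
    simpa [f] using (summable_nat_add_iff 1).2 (Real.summable_one_div_nat_pow.2 hp)
  have hodd : HasSum (fun k => f (2 * k + 1)) (1 / 2 ^ p * ∑' n, f n) := by
    refine (hf.hasSum.mul_left (1 / 2 ^ p)).congr_fun fun k => ?_
    simp only [f]
    push_cast
    rw [show (2 * k + 1 + 1 : ℝ) = 2 * (k + 1) by ring, mul_pow]
    field_simp
  have heven : Summable fun k => f (2 * k) :=
    hf.comp_injective (mul_right_injective₀ two_ne_zero)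
  have hsplit := (heven.hasSum.even_add_odd hodd).unique hf.hasSum
  convert heven.hasSum using 1
  · ext k; simp [f]
  · linarith

theorem summable_neg_one_pow_div_two_mul_add_one_sq :
    Summable fun k : ℕ => (-1 : ℝ) ^ k / (2 * k + 1) ^ 2 := by
  refine (hasSum_one_div_two_mul_add_one_pow one_lt_two).summable.of_norm_bounded fun k => ?_
  rw [norm_div, norm_pow, norm_neg, norm_one, one_pow, Real.norm_of_nonneg (by positivity)]

theorem hasSum_catalan_zeta3 :
    HasSum (fun k : ℕ => -π * ((-1) ^ k / (2 * k + 1) ^ 2) + 4 * (1 / (2 * k + 1) ^ 3))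
      (-π * catalanConst + 7 / 2 * zeta3) := by
  rw [show 7 / 2 * zeta3 = 4 * ((1 - 1 / 2 ^ 3) * zeta3) by ring]
  exact (summable_neg_one_pow_div_two_mul_add_one_sq.hasSum.mul_left (-π)).add
    ((hasSum_one_div_two_mul_add_one_pow (by norm_num : 1 < 3)).mul_left 4)

theorem stmt_6 :
    ∫ θ in (0:ℝ)..(Real.pi / 2), ∫ u in (0:ℝ)..θ, u / Real.sin u =
      -Real.pi * catalanConst + (7 / 2) * zeta3 := by
  have hsinc : ∀ u ∈ uIcc 0 (π / 2), sinc u ≠ 0 := fun u hu => by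
    rw [uIcc_of_le (by positivity)] at hu
    exact (sinc_pos (by rw [abs_of_nonneg hu.1]; linarith [pi_pos, hu.2])).ne'
  have hcont : ContinuousOn (fun u => (sinc u)⁻¹) (uIcc 0 (π / 2)) :=
    continuous_sinc.continuousOn.inv₀ hsinc
  have hinner (θ : ℝ) : ∫ u in (0:ℝ)..θ, u / sin u = ∫ u in (0:ℝ)..θ, (sinc u)⁻¹ := by
    refine intervalIntegral.integral_congr_ae ((Measure.ae_ne volume 0).mono fun u hu _ => ?_)
    rw [sinc_of_ne_zero hu, inv_div]
  have hcoeff (k : ℕ) :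
      ∫ u in (0:ℝ)..π / 2, (π / 2 - u) * (sinc u)⁻¹ * sin u * (2 * sin ((2 * k + 1) * u))
        = -π * ((-1) ^ k / (2 * k + 1) ^ 2) + 4 * (1 / (2 * k + 1) ^ 3) := by
    rw [intervalIntegral.integral_congr
        (g := fun u => 2 * ((π / 2 - u) * u * sin ((2 * k + 1) * u)))
        fun u hu => by rw [← mul_sinc]; field_simp [hsinc u hu],
      intervalIntegral.integral_const_mul, integral_sub_mul_mul_sin_odd]
    ring
  simp_rw [hinner]
  rw [integral_primitive_eq_integral_sub_mul hcont]
  refine tendsto_nhds_unique (tendsto_sum_integral_mul_sin_mul_two_mul_sin_odd (by positivity)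
    ((continuousOn_const.sub continuousOn_id).mul hcont).intervalIntegrable) ?_
  simpa only [hcoeff] using hasSum_catalan_zeta3.tendsto_sum_nat
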